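/- arXiv:1804.06937 — 2 statements merged into one kernel-verified Lean document; each statement's English description precedes it below -/
import Mathlib

section
/- The function x*(t) defined by x*(t) = 1 for t ∈ [-1,2] and x*(t) = (e^{t-2} + e^{4-t})/(e^2+1) for t ∈ [2,3], together with u*(t) defined by u*(t) = 0 for t ∈ [-2,0), u*(t) = (e^t - e^{2-t})/(e^2+1) for t ∈ [0,1], and u*(t) = 0 for t ∈ [1,3], satisfies the delayed differential equation ẋ*(t) = x*(t-1)·u*(t-2) for all t ∈ (0,3) where the derivative exists (i.e., on (0,2) and (2,3)). -/
open Real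

/-- The optimal state trajectory of the example. -/
noncomputable def xstar (t : ℝ) : ℝ :=
  if t ≤ 2 then 1 else (exp (t - 2) + exp (4 - t)) / (exp 2 + 1)

/-- The optimal control of the example. -/
noncomputable def ustar (t : ℝ) : ℝ :=
  if t < 0 then 0
  else if t ≤ 1 then (exp t - exp (2 - t)) / (exp 2 + 1)
  else 0

/-- The candidate pair (x*, u*) satisfies the delayed differential equation
ẋ*(t) = x*(t-1)·u*(t-2) on (0,2) and on (2,3). -/
theorem xstar_solves_delayed_ode :
    ∀ t ∈ Set.Ioo (0 : ℝ) 2 ∪ Set.Ioo (2 : ℝ) 3,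
      HasDerivAt xstar (xstar (t - 1) * ustar (t - 2)) t := by
  rintro t (⟨h0, h2⟩ | ⟨h2, h3⟩)
  · -- t ∈ (0,2): xstar = 1 near t, derivative 0; ustar (t-2) = 0
    have hu : ustar (t - 2) = 0 := by
      unfold ustar; rw [if_pos (by linarith)]
    rw [hu, mul_zero]
    have : xstar =ᶠ[nhds t] fun _ => (1 : ℝ) := by
      filter_upwards [Iio_mem_nhds h2] with s hs
      unfold xstar; rw [if_pos (le_of_lt hs)]
    exact (hasDerivAt_const t (1 : ℝ)).congr_of_eventuallyEq this
  · -- t ∈ (2,3)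
    have hx1 : xstar (t - 1) = 1 := by
      unfold xstar; rw [if_pos (by linarith)]
    have hu : ustar (t - 2) = (exp (t - 2) - exp (4 - t)) / (exp 2 + 1) := by
      unfold ustar
      rw [if_neg (by linarith), if_pos (by linarith)]
      ring_nf
    rw [hx1, hu, one_mul]
    have heq : xstar =ᶠ[nhds t] fun s => (exp (s - 2) + exp (4 - s)) / (exp 2 + 1) := by
      filter_upwards [Ioi_mem_nhds h2] with s hs
      unfold xstar; rw [if_neg (not_le.mpr hs)]
    have hd : HasDerivAt (fun s => (exp (s - 2) + exp (4 - s)) / (exp 2 + 1))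
        ((exp (t - 2) - exp (4 - t)) / (exp 2 + 1)) t := by
      have h1 : HasDerivAt (fun s : ℝ => exp (s - 2)) (exp (t - 2)) t := by
        simpa using ((hasDerivAt_id t).sub_const 2).exp
      have h2' : HasDerivAt (fun s : ℝ => exp (4 - s)) (-exp (4 - t)) t := by
        simpa using ((hasDerivAt_id t).const_sub 4).exp
      simpa [sub_eq_add_neg] using (h1.add h2').div_const (exp 2 + 1)
    exact hd.congr_of_eventuallyEq heq
end

section
/- Suppose x, u are as in the delayed problem with delays r = hk, s = hl, b = a + hN, and define ξ(t) = (ξ₀(t),…,ξ_{N−1}(t)), θ(t) = (θ₀(t),…,θ_{N−1}(t)) with ξᵢ(t) = x(t+hi), θᵢ(t) = u(t+hi). Then the delayed cost C_D[u] = g⁰(x(b)) + ∫ₐᵇ f⁰(t, x(t), x(t−r), u(t), u(t−s)) dt equals the non-delayed cost C̄[θ] = g⁰(ξ_{N−1}(a+h)) + ∫ₐ^{a+h} Σ_{i=0}^{N−1} f⁰(t+hi, ξᵢ(t), ξ_{i−k}(t), θᵢ(t), θ_{i−l}(t)) dt. -/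
/-- The delayed cost C_D[u] equals the non-delayed cost C̄[θ] after Guinn's
transformation ξᵢ(t) = x(t+hi), θᵢ(t) = u(t+hi), noting
ξ_{i-k}(t) = x(t+hi-r) and θ_{i-l}(t) = u(t+hi-s). -/
theorem cost_equivalence {n m : ℕ}
    (f0 : ℝ → (Fin n → ℝ) → (Fin n → ℝ) → (Fin m → ℝ) → (Fin m → ℝ) → ℝ)
    (g0 : (Fin n → ℝ) → ℝ)
    (x : ℝ → Fin n → ℝ) (u : ℝ → Fin m → ℝ)
    (a b h r s : ℝ) (N k l : ℕ) (hh : 0 < h) (hN : 1 ≤ N)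
    (hb : b = a + h * N) (hr : r = h * k) (hs : s = h * l)
    (hint : IntervalIntegrable
      (fun t => f0 t (x t) (x (t - r)) (u t) (u (t - s)))
      MeasureTheory.volume a b) :
    g0 (x b) + ∫ t in a..b, f0 t (x t) (x (t - r)) (u t) (u (t - s)) =
      g0 (x ((a + h) + h * (N - 1 : ℕ))) +
        ∫ t in a..(a + h), ∑ i ∈ Finset.range N,
          f0 (t + h * i) (x (t + h * i)) (x (t + h * i - r))
            (u (t + h * i)) (u (t + h * i - s)) := by
  set F : ℝ → ℝ := fun t => f0 t (x t) (x (t - r)) (u t) (u (t - s)) with hF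
  -- endpoints
  have hNb : a + h + h * ((N - 1 : ℕ) : ℝ) = b := by
    have : ((N - 1 : ℕ) : ℝ) = (N : ℝ) - 1 := by
      push_cast [Nat.cast_sub hN]; ring
    rw [this, hb]; ring
  -- integrability on each piece
  have hmono : ∀ i : ℕ, i < N → IntervalIntegrable F MeasureTheory.volume
      (a + h * i) (a + h * (i + 1)) := by
    intro i hi
    apply hint.mono_set
    rw [Set.uIcc_of_le, Set.uIcc_of_le]
    · apply Set.Icc_subset_Icc
      · nlinarith [Nat.cast_nonneg (α := ℝ) i]
      · rw [hb]
        have : (i : ℝ) + 1 ≤ (N : ℝ) := by exact_mod_cast hi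
        nlinarith
    · rw [hb]; nlinarith [Nat.cast_nonneg (α := ℝ) N]
    · nlinarith
  have hshift : ∀ i : ℕ, i < N → IntervalIntegrable (fun t => F (t + h * i))
      MeasureTheory.volume a (a + h) := by
    intro i hi
    have := (hmono i hi).comp_add_right (h * i)
    have e1 : a + h * i - h * i = a := by ring
    have e2 : a + h * (i + 1) - h * i = a + h := by ring
    rwa [e1, e2] at this
  have hsum : (∫ t in a..(a + h), ∑ i ∈ Finset.range N, F (t + h * i)) =
      ∑ i ∈ Finset.range N, ∫ t in a..(a + h), F (t + h * i) := by
    apply intervalIntegral.integral_finset_sum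
    intro i hi
    exact hshift i (Finset.mem_range.mp hi)
  have hpiece : ∀ i : ℕ, i < N → (∫ t in a..(a + h), F (t + h * i)) =
      ∫ t in (a + h * i)..(a + h * (i + 1)), F t := by
    intro i hi
    rw [intervalIntegral.integral_comp_add_right]
    congr 1 <;> ring
  have hsplit : (∑ i ∈ Finset.range N,
      ∫ t in (a + h * i)..(a + h * (i + 1)), F t) = ∫ t in a..b, F t := by
    have := intervalIntegral.sum_integral_adjacent_intervals
      (f := F) (a := fun i : ℕ => a + h * i) (n := N) (μ := MeasureTheory.volume) ?_
    · push_cast at this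
      rw [mul_zero, add_zero] at this
      rw [hb]
      exact this
    · intro i hi
      have := hmono i hi
      convert this using 2; push_cast; ring
  have hint2 : (∫ t in a..(a + h), ∑ i ∈ Finset.range N, F (t + h * i)) =
      ∫ t in a..b, F t := by
    rw [hsum, ← hsplit]
    apply Finset.sum_congr rfl
    intro i hi
    exact hpiece i (Finset.mem_range.mp hi)
  have hx : x ((a + h) + h * (N - 1 : ℕ)) = x b := by rw [hNb]
  calc g0 (x b) + ∫ t in a..b, F t
      = g0 (x ((a + h) + h * (N - 1 : ℕ))) +
        ∫ t in a..(a + h), ∑ i ∈ Finset.range N, F (t + h * i) := by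
        rw [hx, hint2]
    _ = _ := rfl
end
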